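/- arXiv:2409.15048 — 4 statements merged into one kernel-verified Lean document; each statement's English description precedes it below -/
import Mathlib

section
/- Let K be a convex body in R^d and λ > 0. Suppose the witness set A_K^λ = {u ∈ S^{d-1} : width_K(u) ≤ λ} cannot be covered by a zone of half-width less than ω. Then the diameter of K is at most λ/ω. -/
/-!
For `p ≠ q` in `K` put `x = (p - q) / ‖p - q‖`. For every `c < ω` the witness set escapes the
zone of half-width `c` around `x`, so some `u` with `width_K(u) ≤ λ` has `|⟪u, x⟫| > c`; then
`c ‖p - q‖ < |⟪u, p - q⟫| ≤ width_K(u) ≤ λ`.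
-/

open scoped RealInnerProductSpace

noncomputable def widthIn {d : ℕ} (K : Set (EuclideanSpace ℝ (Fin d)))
    (u : EuclideanSpace ℝ (Fin d)) : ℝ :=
  sSup ((fun x => (⟪x, u⟫ : ℝ)) '' K) - sInf ((fun x => (⟪x, u⟫ : ℝ)) '' K)

section Width

variable {d : ℕ} {K : Set (EuclideanSpace ℝ (Fin d))}

lemma inner_sub_inner_le_widthIn (hK : IsCompact K) {p q : EuclideanSpace ℝ (Fin d)}
    (hp : p ∈ K) (hq : q ∈ K) (u : EuclideanSpace ℝ (Fin d)) :
    ⟪p, u⟫ - ⟪q, u⟫ ≤ widthIn K u := by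
  have hcompact : IsCompact ((fun x => ⟪x, u⟫) '' K) :=
    hK.image (continuous_id.inner continuous_const)
  have hsup : ⟪p, u⟫ ≤ sSup ((fun x => ⟪x, u⟫) '' K) :=
    le_csSup hcompact.bddAbove ⟨p, hp, rfl⟩
  have hinf : sInf ((fun x => ⟪x, u⟫) '' K) ≤ ⟪q, u⟫ :=
    csInf_le hcompact.bddBelow ⟨q, hq, rfl⟩
  unfold widthIn
  linarith

lemma abs_inner_sub_le_widthIn (hK : IsCompact K) {p q : EuclideanSpace ℝ (Fin d)}
    (hp : p ∈ K) (hq : q ∈ K) (u : EuclideanSpace ℝ (Fin d)) :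
    |⟪u, p - q⟫| ≤ widthIn K u := by
  rw [real_inner_comm, inner_sub_left, abs_sub_le_iff]
  exact ⟨inner_sub_inner_le_widthIn hK hp hq u, inner_sub_inner_le_widthIn hK hq hp u⟩

end Width

lemma mul_norm_le_of_forall_lt_abs_inner {E : Type*} [NormedAddCommGroup E]
    [InnerProductSpace ℝ E] {v : E} (hv : v ≠ 0) {ω lam : ℝ}
    (h : ∀ c < ω, ∃ u : E, c < |⟪u, ‖v‖⁻¹ • v⟫| ∧ |⟪u, v⟫| ≤ lam) :
    ω * ‖v‖ ≤ lam := by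
  have hnorm : 0 < ‖v‖ := norm_pos_iff.mpr hv
  rw [← le_div_iff₀ hnorm]
  refine le_of_forall_lt fun c hc => ?_
  obtain ⟨u, hcu, hu⟩ := h c hc
  calc c < |⟪u, ‖v‖⁻¹ • v⟫| := hcu
    _ = |⟪u, v⟫| / ‖v‖ := by
      rw [real_inner_smul_right, abs_mul, abs_inv, abs_norm, inv_mul_eq_div]
    _ ≤ lam / ‖v‖ := by gcongr

theorem diam_via_width_of_witness_set_general (d : ℕ) (K : Set (EuclideanSpace ℝ (Fin d)))
    (hKc : IsCompact K)
    (lam ω : ℝ) (hlam : 0 < lam) (hω : 0 < ω)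
    (hcov : ∀ x : EuclideanSpace ℝ (Fin d), ‖x‖ = 1 → ∀ ω' : ℝ, ω' < ω →
      ¬ ({u : EuclideanSpace ℝ (Fin d) | ‖u‖ = 1 ∧ widthIn K u ≤ lam} ⊆
          {u : EuclideanSpace ℝ (Fin d) | ‖u‖ = 1 ∧ |(⟪u, x⟫ : ℝ)| ≤ ω'})) :
    Metric.diam K ≤ lam / ω := by
  refine Metric.diam_le_of_forall_dist_le (by positivity) fun p hp q hq => ?_
  rw [dist_eq_norm, le_div_iff₀' hω]
  rcases eq_or_ne (p - q) 0 with hpq | hpq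
  · simpa [hpq] using hlam.le
  refine mul_norm_le_of_forall_lt_abs_inner hpq fun c hc => ?_
  obtain ⟨u, ⟨hu, hwidth⟩, hzone⟩ :=
    Set.not_subset.mp (hcov _ (norm_smul_inv_norm (𝕜 := ℝ) hpq) c hc)
  exact ⟨u, lt_of_not_ge fun hle => hzone ⟨hu, hle⟩,
    (abs_inner_sub_le_widthIn hKc hp hq u).trans hwidth⟩

/-- If the witness set `A_K^λ = {u ∈ S^{d-1} : width_K(u) ≤ λ}` of a convex body `K`
cannot be covered by a zone of half-width less than `ω`, then `diam K ≤ λ/ω`. -/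
theorem diam_via_width_of_witness_set (d : ℕ) (K : Set (EuclideanSpace ℝ (Fin d)))
    (hK : Convex ℝ K) (hKc : IsCompact K) (hKi : (interior K).Nonempty)
    (lam ω : ℝ) (hlam : 0 < lam) (hω : 0 < ω)
    (hcov : ∀ x : EuclideanSpace ℝ (Fin d), ‖x‖ = 1 → ∀ ω' : ℝ, ω' < ω →
      ¬ ({u : EuclideanSpace ℝ (Fin d) | ‖u‖ = 1 ∧ widthIn K u ≤ lam} ⊆
          {u : EuclideanSpace ℝ (Fin d) | ‖u‖ = 1 ∧ |(⟪u, x⟫ : ℝ)| ≤ ω'})) :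
    Metric.diam K ≤ lam / ω :=
  diam_via_width_of_witness_set_general d K hKc lam ω hlam hω hcov
end

section
/- Let f be a log-concave function on R^d with f ≥ h pointwise, where h(x) = √(1−‖x‖²) on the unit ball and 0 outside. Suppose f(u) = h(u) for some u with ‖u‖ < 1. Then for all x ∈ R^d, f(x) ≤ h(u)·exp(−⟨u, x−u⟩/h(u)²). -/
open scoped RealInnerProductSpace

/-- If a log-concave function `f` lies above the height function `h(x) = √(1-‖x‖²)` of the
unit ball and touches it at a point `u` with `‖u‖ < 1`, then
`f(x) ≤ h(u)·exp(-⟨u, x-u⟩/h(u)²)` for all `x`. -/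
theorem touching_ball_bound (d : ℕ)
    (f : EuclideanSpace ℝ (Fin d) → ℝ)
    (hf0 : ∀ x, 0 ≤ f x)
    (hlc : ∀ x y : EuclideanSpace ℝ (Fin d), ∀ t ∈ Set.Icc (0:ℝ) 1,
      f x ^ t * f y ^ (1 - t) ≤ f (t • x + (1 - t) • y))
    (hfh : ∀ x, Real.sqrt (1 - ‖x‖ ^ 2) ≤ f x)
    (u : EuclideanSpace ℝ (Fin d)) (hu : ‖u‖ < 1)
    (hfu : f u = Real.sqrt (1 - ‖u‖ ^ 2)) :
    ∀ x, f x ≤ Real.sqrt (1 - ‖u‖ ^ 2) *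
      Real.exp (-(⟪u, x - u⟫ : ℝ) / (Real.sqrt (1 - ‖u‖ ^ 2)) ^ 2) := by
  intro x
  set C : ℝ := 1 - ‖u‖ ^ 2 with hCdef
  have hC : 0 < C := by
    have : ‖u‖ ^ 2 < 1 := by nlinarith [norm_nonneg u]
    linarith
  set c : ℝ := Real.sqrt C with hcdef
  have hc : 0 < c := Real.sqrt_pos.mpr hC
  have hlogc : Real.log c = Real.log C / 2 := Real.log_sqrt hC.le
  set v : EuclideanSpace ℝ (Fin d) := x - u with hvdef
  set p : ℝ := ⟪u, v⟫ with hpdef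
  set Q : ℝ → ℝ := fun s => C + 2 * p * s - ‖v‖ ^ 2 * s ^ 2 with hQdef
  have hQ0 : Q 0 = C := by simp [hQdef]
  have hnorm : ∀ s : ℝ, 1 - ‖u - s • v‖ ^ 2 = Q s := by
    intro s
    have h1 : ‖u - s • v‖ ^ 2 = ‖u‖ ^ 2 - 2 * ⟪u, s • v⟫ + ‖s • v‖ ^ 2 :=
      norm_sub_sq_real u (s • v)
    have h2 : (⟪u, s • v⟫ : ℝ) = s * p := real_inner_smul_right u v s
    have h3 : ‖s • v‖ ^ 2 = s ^ 2 * ‖v‖ ^ 2 := by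
      rw [norm_smul, mul_pow, Real.norm_eq_abs, sq_abs]
    rw [hQdef]
    simp only []
    rw [h1, h2, h3, hCdef]; ring
  -- the pointwise bound for small s > 0
  have key : ∀ᶠ s in nhdsWithin (0:ℝ) (Set.Ioi 0),
      f x ≤ c * Real.exp (-(slope (fun r => Real.log (Q r)) 0 s) / 2) := by
    have hQcont : Filter.Tendsto Q (nhdsWithin (0:ℝ) (Set.Ioi 0)) (nhds C) := by
      have : Continuous Q := by rw [hQdef]; continuity
      simpa [hQ0] using (this.continuousAt (x := (0:ℝ))).tendsto.mono_left nhdsWithin_le_nhds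
    filter_upwards [hQcont.eventually (eventually_gt_nhds hC), self_mem_nhdsWithin]
      with s hQs hs
    have hs : (0:ℝ) < s := hs
    set t : ℝ := s / (1 + s) with htdef
    have h1s : (0:ℝ) < 1 + s := by linarith
    have h1s' : (1 + s) ≠ 0 := ne_of_gt h1s
    have ht0 : 0 < t := div_pos hs h1s
    have ht1 : t < 1 := by rw [htdef, div_lt_one h1s]; linarith
    have htmem : t ∈ Set.Icc (0:ℝ) 1 := ⟨ht0.le, ht1.le⟩
    set z : EuclideanSpace ℝ (Fin d) := u - s • v with hzdef
    have hcomb : t • x + (1 - t) • z = u := by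
      rw [hzdef, hvdef, htdef]
      match_scalars <;> field_simp <;> ring
    have hfz : Real.sqrt (Q s) ≤ f z := by
      have := hfh z
      rwa [hzdef, hnorm s] at this
    have hQsqrt : 0 < Real.sqrt (Q s) := Real.sqrt_pos.mpr hQs
    have hlc' : f x ^ t * f z ^ (1 - t) ≤ c := by
      have := hlc x z t htmem
      rwa [hcomb, hfu] at this
    have hstep : f x ^ t * Real.sqrt (Q s) ^ (1 - t) ≤ c := by
      refine le_trans ?_ hlc'
      gcongr
      · exact Real.rpow_nonneg (hf0 x) t
    have hbase : 0 < Real.sqrt (Q s) ^ (1 - t) := Real.rpow_pos_of_pos hQsqrt _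
    have hdiv : f x ^ t ≤ c / Real.sqrt (Q s) ^ (1 - t) := by
      rw [le_div_iff₀ hbase]; exact hstep
    have hfx : f x = (f x ^ t) ^ (1 / t) := by
      rw [← Real.rpow_mul (hf0 x), mul_one_div_cancel ht0.ne', Real.rpow_one]
    have hmono : f x ≤ (c / Real.sqrt (Q s) ^ (1 - t)) ^ (1 / t) := by
      rw [hfx]
      exact Real.rpow_le_rpow (Real.rpow_nonneg (hf0 x) t) hdiv (by positivity)
    refine hmono.trans_eq ?_
    have hdpos : 0 < c / Real.sqrt (Q s) ^ (1 - t) := div_pos hc hbase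
    rw [Real.rpow_def_of_pos hdpos, Real.log_div hc.ne' hbase.ne',
      Real.log_rpow hQsqrt, Real.log_sqrt hQs.le]
    rw [show c * Real.exp (-(slope (fun r => Real.log (Q r)) 0 s) / 2)
        = Real.exp (Real.log c + -(slope (fun r => Real.log (Q r)) 0 s) / 2) by
      rw [Real.exp_add, Real.exp_log hc]]
    congr 1
    rw [slope_def_field]
    simp only [hQ0, sub_zero]
    rw [hlogc, htdef]
    field_simp
    ring
  -- the limit
  have hQder : HasDerivAt Q (2 * p) 0 := by
    have h1 : HasDerivAt (fun r : ℝ => 2 * p * r) (2 * p) 0 := by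
      simpa using (hasDerivAt_id (0:ℝ)).const_mul (2 * p)
    have h2 : HasDerivAt (fun r : ℝ => ‖v‖ ^ 2 * r ^ 2) 0 0 := by
      simpa using (hasDerivAt_pow 2 (0:ℝ)).const_mul (‖v‖ ^ 2)
    have h3 := (h1.const_add C).sub h2
    rw [sub_zero] at h3
    rw [hQdef]
    exact h3
  have hφ : HasDerivAt (fun r => Real.log (Q r)) (2 * p / C) 0 := by
    have := hQder.log (by rw [hQ0]; exact hC.ne')
    rwa [hQ0] at this
  have hslope : Filter.Tendsto (slope (fun r => Real.log (Q r)) 0)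
      (nhdsWithin (0:ℝ) (Set.Ioi 0)) (nhds (2 * p / C)) :=
    (hasDerivAt_iff_tendsto_slope.mp hφ).mono_left
      (nhdsWithin_mono _ (fun y hy => ne_of_gt hy))
  have htend : Filter.Tendsto (fun s => c * Real.exp (-(slope (fun r => Real.log (Q r)) 0 s) / 2))
      (nhdsWithin (0:ℝ) (Set.Ioi 0)) (nhds (c * Real.exp (-(2 * p / C) / 2))) :=
    (((hslope.neg).div_const 2).rexp).const_mul c
  have hfinal : f x ≤ c * Real.exp (-(2 * p / C) / 2) := ge_of_tendsto htend key
  refine hfinal.trans_eq ?_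
  rw [Real.sq_sqrt hC.le]
  congr 1
  ring
end

section
/- If the Euclidean unit ball B^d is the Löwner ellipsoid (smallest-volume enclosing ellipsoid) of a convex body K in R^d, then K contains the ball (1/d)·B^d. -/
open MeasureTheory Pointwise Filter

private lemma lowner_exists_good_t (d : ℕ) (hd : 1 ≤ d) (β : ℝ) (hβ : 0 < β)
    (hβd : (d : ℝ) - 1 < d * β) :
    ∃ t : ℝ, 0 < t ∧ t < 1 ∧ 2 * t < β ∧
      (1 - t) ^ (2 * d) * β ^ (d - 1) < (β - 2 * t) ^ (d - 1) := by
  set g : ℝ → ℝ := fun t => (1 - t) ^ (2 * d) * β ^ (d - 1) - (β - 2 * t) ^ (d - 1) with hg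
  have hg0 : g 0 = 0 := by simp [hg]
  have h1 : HasDerivAt (fun t : ℝ => (1 - t) ^ (2 * d)) (-(2 * d) * (1 : ℝ) ^ (2 * d - 1)) 0 := by
    have := ((hasDerivAt_id (0:ℝ)).const_sub 1).pow (2 * d)
    simpa [Pi.pow_def] using this
  have h2 : HasDerivAt (fun t : ℝ => (β - 2 * t) ^ (d - 1))
      (-2 * ((d - 1 : ℕ) * β ^ (d - 1 - 1))) 0 := by
    have hb : HasDerivAt (fun t : ℝ => β - 2 * t) (-2) 0 := by
      simpa using ((hasDerivAt_id (0:ℝ)).const_mul 2).const_sub β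
    have := hb.pow (d - 1)
    have heq : ((d - 1 : ℕ) : ℝ) * (β - 2 * 0) ^ (d - 1 - 1) * (-2)
        = -2 * ((d - 1 : ℕ) * β ^ (d - 1 - 1)) := by ring_nf
    rw [heq] at this
    exact this
  have hder : HasDerivAt g
      (-(2 * d) * (1:ℝ) ^ (2 * d - 1) * β ^ (d - 1) - -2 * ((d - 1 : ℕ) * β ^ (d - 1 - 1))) 0 :=
    (h1.mul_const (β ^ (d - 1))).sub h2
  have hneg : (-(2 * (d:ℝ)) * (1:ℝ) ^ (2 * d - 1) * β ^ (d - 1)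
      - -2 * ((d - 1 : ℕ) * β ^ (d - 1 - 1))) < 0 := by
    rw [one_pow]
    rcases eq_or_lt_of_le hd with h | h
    · simp [← h]
    · have hd2 : 2 ≤ d := h
      have hrw : β ^ (d - 1) = β ^ (d - 1 - 1) * β := by
        rw [← pow_succ]; congr 1; omega
      have hpow : (0:ℝ) < β ^ (d - 1 - 1) := pow_pos hβ _
      have hcast : ((d - 1 : ℕ) : ℝ) = (d : ℝ) - 1 := by
        push_cast [Nat.cast_sub hd]; ring
      rw [hrw, hcast]
      nlinarith [hβd, hpow]
  have hslope := hasDerivAt_iff_tendsto_slope.1 hder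
  have hslope' : Tendsto (slope g 0) (nhdsWithin 0 (Set.Ioi 0)) (nhds _) :=
    hslope.mono_left (nhdsWithin_mono 0 (by intro x hx; simpa using ne_of_gt hx))
  have hev : ∀ᶠ t in nhdsWithin 0 (Set.Ioi 0), slope g 0 t < 0 :=
    hslope'.eventually (gt_mem_nhds hneg)
  have hev2 : ∀ᶠ t in nhdsWithin (0:ℝ) (Set.Ioi 0), t ∈ Set.Ioo 0 (min 1 (β / 2)) := by
    apply Ioo_mem_nhdsGT_of_mem
    constructor
    · rfl
    · positivity
  obtain ⟨t, hts, ht⟩ := (hev.and hev2).exists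
  refine ⟨t, ht.1, lt_of_lt_of_le ht.2 (min_le_left _ _), ?_, ?_⟩
  · have := lt_of_lt_of_le ht.2 (min_le_right _ _); linarith
  · have hgt : g t < 0 := by
      have hslope_eq : slope g 0 t = g t / t := by
        simp [slope, hg0, div_eq_inv_mul]
      rw [hslope_eq] at hts
      rcases div_neg_iff.1 hts with ⟨h1', h2'⟩ | ⟨h1', h2'⟩
      · linarith [ht.1]
      · exact h1'
    have h' : (1 - t) ^ (2 * d) * β ^ (d - 1) - (β - 2 * t) ^ (d - 1) < 0 := hgt
    linarith

private noncomputable def lownerScaleMap (d : ℕ) (w : Fin d → ℝ) (hw : ∀ i, w i ≠ 0) :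
    EuclideanSpace ℝ (Fin d) ≃ₗ[ℝ] EuclideanSpace ℝ (Fin d) :=
  (EuclideanSpace.equiv (Fin d) ℝ).toLinearEquiv ≪≫ₗ
    (LinearEquiv.piCongrRight fun i => LinearEquiv.smulOfNeZero ℝ ℝ (w i) (hw i)) ≪≫ₗ
    (EuclideanSpace.equiv (Fin d) ℝ).toLinearEquiv.symm

private lemma lownerScaleMap_symm_apply (d : ℕ) (w : Fin d → ℝ) (hw : ∀ i, w i ≠ 0)
    (x : EuclideanSpace ℝ (Fin d)) (i : Fin d) :
    (lownerScaleMap d w hw).symm x i = (w i)⁻¹ * x i := rfl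

private lemma lownerScaleMap_det (d : ℕ) (w : Fin d → ℝ) (hw : ∀ i, w i ≠ 0) :
    LinearMap.det ((lownerScaleMap d w hw) :
      EuclideanSpace ℝ (Fin d) →ₗ[ℝ] EuclideanSpace ℝ (Fin d)) = ∏ i, w i := by
  unfold lownerScaleMap
  set P := (LinearEquiv.piCongrRight fun i => LinearEquiv.smulOfNeZero ℝ ℝ (w i) (hw i))
  set e := (EuclideanSpace.equiv (Fin d) ℝ).toLinearEquiv
  have h1 : ((e ≪≫ₗ P ≪≫ₗ e.symm : _) : EuclideanSpace ℝ (Fin d) →ₗ[ℝ] EuclideanSpace ℝ (Fin d))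
      = (e.symm : (Fin d → ℝ) →ₗ[ℝ] EuclideanSpace ℝ (Fin d)) ∘ₗ
        (P : (Fin d → ℝ) →ₗ[ℝ] (Fin d → ℝ)) ∘ₗ
        (e : EuclideanSpace ℝ (Fin d) →ₗ[ℝ] (Fin d → ℝ)) := rfl
  rw [h1]
  have h2 := LinearMap.det_conj ((P : (Fin d → ℝ) →ₗ[ℝ] (Fin d → ℝ))) e.symm
  simp only [LinearEquiv.symm_symm] at h2
  rw [h2, ← LinearMap.det_toMatrix' (P : (Fin d → ℝ) →ₗ[ℝ] (Fin d → ℝ))]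
  have hmat : LinearMap.toMatrix' (P : (Fin d → ℝ) →ₗ[ℝ] (Fin d → ℝ)) = Matrix.diagonal w := by
    ext i j
    rw [LinearMap.toMatrix'_apply]
    by_cases h : i = j
    · subst h; simp [P, Matrix.diagonal, LinearEquiv.smulOfNeZero, LinearEquiv.smulOfUnit,
        DistribMulAction.toLinearEquiv, smul_eq_mul]
    · simp [P, Matrix.diagonal, h, LinearEquiv.smulOfNeZero, LinearEquiv.smulOfUnit,
        DistribMulAction.toLinearEquiv, smul_eq_mul, Ne.symm h]
  rw [hmat, Matrix.det_diagonal]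

private lemma lowner_key_quad (h0 t a b β : ℝ) (hβ : β = 1 - h0) (ha : a = 1 - t)
    (ht : 0 < t) (ht2 : 2*t < β) (hb2 : b^2 * (β - 2*t) = β * a^2) :
    ∀ s : ℝ, -1 ≤ s → s ≤ h0 → (s + t)^2 * b^2 + (1 - s^2) * a^2 ≤ a^2 * b^2 := by
  subst hβ ha
  intro s hs1 hs2
  have hident' : ((s + t)^2 * b^2 + (1 - s^2) * (1-t)^2 - (1-t)^2 * b^2) * ((1 - h0) - 2*t)
      = 2*t*(1-t)^2*(s+1)*(s-h0) := by
    linear_combination ((s+t)^2 - (1-t)^2) * hb2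
  have hc : 0 < (1 - h0) - 2*t := by linarith
  have hprod : 2*t*(1-t)^2*(s+1)*(s-h0) ≤ 0 := by
    have h1 : 0 ≤ 2*t*(1-t)^2*(s+1) :=
      mul_nonneg (mul_nonneg (by linarith : (0:ℝ) ≤ 2*t) (sq_nonneg (1-t)))
        (by linarith : (0:ℝ) ≤ s+1)
    exact mul_nonpos_of_nonneg_of_nonpos h1 (by linarith)
  nlinarith [hident', hprod, hc]

private lemma lowner_mem_ellipsoid (d : ℕ) (hd : 0 < d) (u y : EuclideanSpace ℝ (Fin d))
    (hu : ‖u‖ = 1)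
    (R : EuclideanSpace ℝ (Fin d) ≃ₗᵢ[ℝ] EuclideanSpace ℝ (Fin d))
    (hRe0 : R (EuclideanSpace.single ⟨0, hd⟩ (1:ℝ)) = u)
    (a b t h0 : ℝ) (ha : 0 < a) (hb : 0 < b)
    (hy1 : ‖y‖ ≤ 1) (hsy : (inner ℝ u y : ℝ) ≤ h0) (hsy1 : -1 ≤ (inner ℝ u y : ℝ))
    (key : ∀ s : ℝ, -1 ≤ s → s ≤ h0 → (s + t)^2 * b^2 + (1 - s^2) * a^2 ≤ a^2 * b^2)
    (w : Fin d → ℝ) (hwdef : w = fun i => if i = ⟨0, hd⟩ then a else b) (hw : ∀ i, w i ≠ 0) :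
    y ∈ (fun x => (lownerScaleMap d w hw ≪≫ₗ R.toLinearEquiv) x + ((-t) • u)) ''
      Metric.closedBall 0 1 := by
  set i0 : Fin d := ⟨0, hd⟩
  set e0 : EuclideanSpace ℝ (Fin d) := EuclideanSpace.single i0 (1:ℝ) with he0
  set c : EuclideanSpace ℝ (Fin d) := (-t) • u with hc
  set s : ℝ := inner ℝ u y with hs
  set z : EuclideanSpace ℝ (Fin d) := R.symm (y - c) with hz
  set x0 : EuclideanSpace ℝ (Fin d) := (lownerScaleMap d w hw).symm z with hx0
  have hmap : (lownerScaleMap d w hw ≪≫ₗ R.toLinearEquiv) x0 + c = y := by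
    simp [x0, z, LinearEquiv.trans_apply]
  refine ⟨x0, ?_, hmap⟩
  have hx0i : ∀ i, x0 i = (w i)⁻¹ * z i := fun i => rfl
  have hz0 : z i0 = s + t := by
    have h1 : (inner ℝ e0 z : ℝ) = z i0 := by
      simp [he0, EuclideanSpace.inner_single_left]
    have h2 : (inner ℝ e0 z : ℝ) = inner ℝ u (y - c) := by
      rw [hz, ← hRe0]
      rw [← LinearIsometryEquiv.inner_map_map R e0 (R.symm (y - c))]
      simp
    rw [← h1, h2, hc, inner_sub_right]
    have : (inner ℝ u ((-t) • u) : ℝ) = -t := by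
      rw [real_inner_smul_right, real_inner_self_eq_norm_sq, hu]; ring
    rw [this, hs]; ring
  have hznorm : ‖z‖^2 = ‖y‖^2 + 2*t*s + t^2 := by
    rw [hz, LinearIsometryEquiv.norm_map]
    rw [norm_sub_sq_real]
    have h1 : (inner ℝ y c : ℝ) = -t * s := by
      rw [hc, real_inner_smul_right, real_inner_comm, ← hs]
    have h2 : ‖c‖^2 = t^2 := by
      rw [hc, norm_smul, mul_pow, hu]
      simp [sq_abs]
    rw [h1, h2]; ring
  have hsum : ‖x0‖^2 = ∑ i, (x0 i)^2 := by
    rw [EuclideanSpace.norm_eq, Real.sq_sqrt (by positivity)]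
    congr 1; ext i; rw [Real.norm_eq_abs, sq_abs]
  have hzsum : ‖z‖^2 = ∑ i, (z i)^2 := by
    rw [EuclideanSpace.norm_eq, Real.sq_sqrt (by positivity)]
    congr 1; ext i; rw [Real.norm_eq_abs, sq_abs]
  have hsplit : ‖x0‖^2 = (x0 i0)^2 + ∑ i ∈ Finset.univ.erase i0, (x0 i)^2 := by
    rw [hsum, ← Finset.add_sum_erase Finset.univ _ (Finset.mem_univ i0)]
  have hzsplit : ∑ i ∈ Finset.univ.erase i0, (z i)^2 = ‖z‖^2 - (z i0)^2 := by
    rw [hzsum, ← Finset.add_sum_erase Finset.univ _ (Finset.mem_univ i0)]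
    ring
  have hterm1 : (x0 i0)^2 = (s+t)^2 / a^2 := by
    rw [hx0i, hz0, hwdef]
    simp [i0]
    rw [div_eq_inv_mul, mul_pow]
    ring_nf
  have hterm2 : ∑ i ∈ Finset.univ.erase i0, (x0 i)^2 = (‖z‖^2 - (s+t)^2) / b^2 := by
    rw [← hz0, ← hzsplit, Finset.sum_div]
    apply Finset.sum_congr rfl
    intro i hi
    have hne : i ≠ i0 := Finset.ne_of_mem_erase hi
    rw [hx0i, hwdef]
    simp [hne]
    rw [div_eq_inv_mul, mul_pow]
    ring_nf
  have hfin : ‖x0‖^2 ≤ 1 := by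
    rw [hsplit, hterm1, hterm2]
    have hyb : ‖z‖^2 - (s+t)^2 ≤ 1 - s^2 := by
      rw [hznorm]; nlinarith [hy1, norm_nonneg y]
    have h1 : (‖z‖^2 - (s+t)^2) / b^2 ≤ (1 - s^2)/b^2 := by
      gcongr
    have h2 : (s+t)^2/a^2 + (1-s^2)/b^2 ≤ 1 := by
      rw [div_add_div _ _ (by positivity : (a:ℝ)^2 ≠ 0) (by positivity : (b:ℝ)^2 ≠ 0),
        div_le_one (by positivity)]
      have hk := key s hsy1 hsy
      linarith [hk]
    linarith
  have hx1 : ‖x0‖ ≤ 1 := (pow_le_one_iff_of_nonneg (norm_nonneg x0) two_ne_zero).1 hfin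
  exact Metric.mem_closedBall.2 (by simpa [dist_zero_right] using hx1)

/-- A subset of `ℝ^d` is an ellipsoid if it is the image of the closed unit ball under an
invertible affine map. -/
def IsEllipsoid {d : ℕ} (S : Set (EuclideanSpace ℝ (Fin d))) : Prop :=
  ∃ (A : EuclideanSpace ℝ (Fin d) ≃ₗ[ℝ] EuclideanSpace ℝ (Fin d))
    (c : EuclideanSpace ℝ (Fin d)),
    S = (fun x => A x + c) '' Metric.closedBall 0 1

/-- If the unit ball `B^d` is the Löwner (smallest-volume enclosing) ellipsoid of a convex
body `K`, then `K ⊇ (1/d)·B^d`. -/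
theorem lowner_inclusion (d : ℕ) (K : Set (EuclideanSpace ℝ (Fin d)))
    (hK : Convex ℝ K) (hKc : IsCompact K) (hKi : (interior K).Nonempty)
    (hsub : K ⊆ Metric.closedBall 0 1)
    (hmin : ∀ S : Set (EuclideanSpace ℝ (Fin d)), IsEllipsoid S → K ⊆ S →
      volume (Metric.closedBall (0 : EuclideanSpace ℝ (Fin d)) 1) ≤ volume S) :
    Metric.closedBall 0 (1 / d) ⊆ K := by
  rcases Nat.eq_zero_or_pos d with hd0 | hd
  · subst hd0
    haveI : Subsingleton (EuclideanSpace ℝ (Fin 0)) :=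
      ⟨fun a b => PiLp.ext fun i => Fin.elim0 i⟩
    intro x _
    obtain ⟨y, hy⟩ := hKi
    have hyK : y ∈ K := interior_subset hy
    rwa [Subsingleton.elim x y]
  intro x hx
  by_contra hxK
  have hdR : (0:ℝ) < d := by exact_mod_cast hd
  -- separation
  obtain ⟨f, r, hfK, hfx⟩ := geometric_hahn_banach_closed_point hK hKc.isClosed hxK
  set v : EuclideanSpace ℝ (Fin d) :=
    (InnerProductSpace.toDual ℝ (EuclideanSpace ℝ (Fin d))).symm f with hv
  have hvinner : ∀ y : EuclideanSpace ℝ (Fin d), inner ℝ v y = f y := fun y =>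
    InnerProductSpace.toDual_symm_apply
  obtain ⟨y0, hy0⟩ := hKi
  have hy0K : y0 ∈ K := interior_subset hy0
  have hvne : v ≠ 0 := by
    intro h
    have h1 := hvinner x
    have h2 := hvinner y0
    rw [h] at h1 h2
    simp at h1 h2
    have h3 := hfK y0 hy0K
    rw [← h2] at h3
    rw [← h1] at hfx
    linarith
  have hnv : (0:ℝ) < ‖v‖ := norm_pos_iff.2 hvne
  set u : EuclideanSpace ℝ (Fin d) := ‖v‖⁻¹ • v with hudef
  have hu : ‖u‖ = 1 := by
    rw [hudef, norm_smul, norm_inv, norm_norm, inv_mul_cancel₀ hnv.ne']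
  set h0 : ℝ := max (r / ‖v‖) (-1) with hh0
  have hm1 : -1 ≤ h0 := le_max_right _ _
  have hh0lt : h0 < 1 / d := by
    have hux : (inner ℝ u x : ℝ) ≤ (1:ℝ)/d := by
      calc (inner ℝ u x : ℝ) ≤ ‖u‖ * ‖x‖ := real_inner_le_norm _ _
        _ ≤ 1 * (1/d) := by
            rw [hu]
            have : ‖x‖ ≤ 1/d := by
              simpa [Metric.mem_closedBall, dist_zero_right] using hx
            linarith
        _ = 1/d := one_mul _
    have h2 : r / ‖v‖ < (inner ℝ u x : ℝ) := by
      rw [hudef, real_inner_smul_left, hvinner, div_lt_iff₀ hnv]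
      calc r < f x := hfx
        _ = ‖v‖⁻¹ * f x * ‖v‖ := by field_simp
    apply max_lt (lt_of_lt_of_le h2 hux)
    have : (0:ℝ) < 1/d := by positivity
    linarith
  have hKside : ∀ y ∈ K, (inner ℝ u y : ℝ) ≤ h0 := by
    intro y hy
    rw [hudef, real_inner_smul_left, hvinner]
    have h1 : ‖v‖⁻¹ * f y ≤ r / ‖v‖ := by
      rw [div_eq_inv_mul]
      exact mul_le_mul_of_nonneg_left (hfK y hy).le (by positivity)
    exact le_trans h1 (le_max_left _ _)
  -- parameters
  set β : ℝ := 1 - h0 with hβdef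
  have hβpos : 0 < β := by
    have : (1:ℝ)/d ≤ 1 := by
      rw [div_le_one hdR]
      exact_mod_cast hd
    simp only [hβdef]; linarith
  have hβd : (d : ℝ) - 1 < d * β := by
    have : (d:ℝ) * h0 < 1 := by
      calc (d:ℝ) * h0 < d * (1/d) := by
            exact mul_lt_mul_of_pos_left hh0lt hdR
        _ = 1 := by field_simp
    simp only [hβdef]; nlinarith
  obtain ⟨t, htpos, ht1, ht2, hineq⟩ := lowner_exists_good_t d hd β hβpos hβd
  set a : ℝ := 1 - t with hadef
  have hapos : 0 < a := by simp only [hadef]; linarith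
  set b : ℝ := Real.sqrt (β * a^2 / (β - 2*t)) with hbdef
  have hbarg : 0 < β * a^2 / (β - 2*t) := by
    apply div_pos (by positivity) (by linarith)
  have hbpos : 0 < b := Real.sqrt_pos.2 hbarg
  have hb2 : b^2 * (β - 2*t) = β * a^2 := by
    rw [hbdef, Real.sq_sqrt hbarg.le, div_mul_cancel₀ _ (by linarith : β - 2*t ≠ 0)]
  have key := lowner_key_quad h0 t a b β hβdef hadef htpos ht2 hb2
  -- the reflection
  set e0 : EuclideanSpace ℝ (Fin d) := EuclideanSpace.single ⟨0, hd⟩ (1:ℝ) with he0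
  have he0n : ‖e0‖ = 1 := by simp [he0]
  set R := Submodule.reflection (Submodule.span ℝ {e0 - u})ᗮ with hRdef
  have hRe0 : R e0 = u := Submodule.reflection_sub (by rw [he0n, hu])
  have hRdet : |LinearMap.det ((R.toLinearEquiv : EuclideanSpace ℝ (Fin d) ≃ₗ[ℝ]
      EuclideanSpace ℝ (Fin d)) : EuclideanSpace ℝ (Fin d) →ₗ[ℝ] EuclideanSpace ℝ (Fin d))|
      = 1 := by
    have hRR : ((R.toLinearEquiv :
        EuclideanSpace ℝ (Fin d) ≃ₗ[ℝ] EuclideanSpace ℝ (Fin d)) :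
        EuclideanSpace ℝ (Fin d) →ₗ[ℝ] EuclideanSpace ℝ (Fin d)) ∘ₗ
        ((R.toLinearEquiv : EuclideanSpace ℝ (Fin d) ≃ₗ[ℝ] EuclideanSpace ℝ (Fin d)) :
        EuclideanSpace ℝ (Fin d) →ₗ[ℝ] EuclideanSpace ℝ (Fin d)) = LinearMap.id := by
      ext x
      simp [hRdef, Submodule.reflection_reflection]
    have hdet2 := congrArg LinearMap.det hRR
    rw [LinearMap.det_comp, LinearMap.det_id] at hdet2
    rcases mul_self_eq_one_iff.1 hdet2 with h | h
    · rw [h]; norm_num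
    · rw [h]; norm_num
  -- the scaling map
  set w : Fin d → ℝ := fun i => if i = ⟨0, hd⟩ then a else b with hwdef
  have hw : ∀ i, w i ≠ 0 := by
    intro i
    simp only [hwdef]
    split <;> [exact hapos.ne'; exact hbpos.ne']
  have hprodw : (∏ i, w i) = a * b^(d-1) := by
    simp only [hwdef]
    rw [← Finset.mul_prod_erase Finset.univ _ (Finset.mem_univ (⟨0, hd⟩ : Fin d))]
    rw [if_pos rfl]
    congr 1
    rw [Finset.prod_congr rfl (fun i hi => if_neg (Finset.ne_of_mem_erase hi)),
      Finset.prod_const, Finset.card_erase_of_mem (Finset.mem_univ _)]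
    simp
  -- the ellipsoid
  set A := lownerScaleMap d w hw ≪≫ₗ R.toLinearEquiv with hA
  set c : EuclideanSpace ℝ (Fin d) := (-t) • u with hc
  set S := (fun x => A x + c) '' Metric.closedBall 0 1 with hS
  have hSell : IsEllipsoid S := ⟨A, c, rfl⟩
  -- K ⊆ S
  have hKS : K ⊆ S := by
    intro y hy
    apply lowner_mem_ellipsoid d hd u y hu R hRe0 a b t h0 hapos hbpos
    · simpa [Metric.mem_closedBall, dist_zero_right] using hsub hy
    · exact hKside y hy
    · have h1 : |(inner ℝ u y : ℝ)| ≤ ‖u‖ * ‖y‖ := abs_real_inner_le_norm _ _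
      have h2 : ‖y‖ ≤ 1 := by simpa [Metric.mem_closedBall, dist_zero_right] using hsub hy
      rw [hu, one_mul] at h1
      linarith [(abs_le.1 (h1.trans h2)).1]
    · exact key
    · exact hwdef
  -- volume computation
  have hdetA : |LinearMap.det ((A : EuclideanSpace ℝ (Fin d) ≃ₗ[ℝ] EuclideanSpace ℝ (Fin d)) :
      EuclideanSpace ℝ (Fin d) →ₗ[ℝ] EuclideanSpace ℝ (Fin d))| = a * b^(d-1) := by
    have hcoe : ((A : EuclideanSpace ℝ (Fin d) ≃ₗ[ℝ] EuclideanSpace ℝ (Fin d)) :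
        EuclideanSpace ℝ (Fin d) →ₗ[ℝ] EuclideanSpace ℝ (Fin d))
        = ((R.toLinearEquiv : EuclideanSpace ℝ (Fin d) ≃ₗ[ℝ] EuclideanSpace ℝ (Fin d)) :
          EuclideanSpace ℝ (Fin d) →ₗ[ℝ] EuclideanSpace ℝ (Fin d)) ∘ₗ
          ((lownerScaleMap d w hw : EuclideanSpace ℝ (Fin d) ≃ₗ[ℝ] EuclideanSpace ℝ (Fin d)) :
          EuclideanSpace ℝ (Fin d) →ₗ[ℝ] EuclideanSpace ℝ (Fin d)) := rfl
    rw [hcoe, LinearMap.det_comp, abs_mul, hRdet, one_mul, lownerScaleMap_det, hprodw,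
      abs_of_pos (by positivity)]
  have hvolS : volume S = ENNReal.ofReal (a * b^(d-1)) *
      volume (Metric.closedBall (0 : EuclideanSpace ℝ (Fin d)) 1) := by
    rw [hS]
    have h1 : (fun x => A x + c) '' Metric.closedBall 0 1
        = c +ᵥ (⇑((A : EuclideanSpace ℝ (Fin d) ≃ₗ[ℝ] EuclideanSpace ℝ (Fin d)) :
          EuclideanSpace ℝ (Fin d) →ₗ[ℝ] EuclideanSpace ℝ (Fin d)) ''
          Metric.closedBall 0 1) := by
      rw [← Set.image_vadd, Set.image_image]
      apply Set.image_congr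
      intro x _
      simp only [vadd_eq_add, LinearEquiv.coe_coe]
      rw [add_comm]
    rw [h1, measure_vadd, Measure.addHaar_image_linearMap, hdetA]
  -- volume factor < 1
  have hvol1 : a * b^(d-1) < 1 := by
    have hc2 : 0 < β - 2*t := by linarith
    have hb2' : b^2 = β * a^2 / (β - 2*t) := by
      rw [eq_div_iff (by linarith : β - 2*t ≠ 0)]
      exact hb2
    have hsq : (a * b^(d-1))^2 = a^2 * (b^2)^(d-1) := by
      rw [mul_pow, ← pow_mul, mul_comm (d-1) 2, pow_mul]
    have hval : a^2 * (b^2)^(d-1) = ((1-t)^(2*d) * β^(d-1)) / (β - 2*t)^(d-1) := by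
      rw [hb2', div_pow, mul_pow]
      rw [eq_div_iff (by positivity : ((β - 2*t)^(d-1) : ℝ) ≠ 0)]
      field_simp
      have hpowa : a^2 * (a^2)^(d-1) = (1-t)^(2*d) := by
        rw [← pow_succ']
        have : d - 1 + 1 = d := by omega
        rw [this, ← pow_mul, hadef]
      exact hpowa
    have hlt : a^2 * (b^2)^(d-1) < 1 := by
      rw [hval, div_lt_one (by positivity)]
      exact hineq
    have hx2 : (a * b^(d-1))^2 < 1 := by rw [hsq]; exact hlt
    exact (pow_lt_one_iff_of_nonneg (by positivity) two_ne_zero).1 hx2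
  -- contradiction
  have hle := hmin S hSell hKS
  rw [hvolS] at hle
  have hB0 : volume (Metric.closedBall (0 : EuclideanSpace ℝ (Fin d)) 1) ≠ 0 :=
    (Metric.measure_closedBall_pos volume (0 : EuclideanSpace ℝ (Fin d)) one_pos).ne'
  have hBtop : volume (Metric.closedBall (0 : EuclideanSpace ℝ (Fin d)) 1) ≠ ⊤ :=
    measure_closedBall_lt_top.ne
  have hlt1 : ENNReal.ofReal (a * b^(d-1)) *
      volume (Metric.closedBall (0 : EuclideanSpace ℝ (Fin d)) 1)
      < 1 * volume (Metric.closedBall (0 : EuclideanSpace ℝ (Fin d)) 1) := by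
    apply ENNReal.mul_lt_mul_left hB0 hBtop
    simpa using ENNReal.ofReal_lt_one.2 hvol1
  rw [one_mul] at hlt1
  exact absurd hle (not_le.2 hlt1)
end

section
/- Let f : R^d → [0,∞) be log-concave, and let h₁, h₂ be 'ellipsoidal functions' below f with base ellipsoids E₁ = A₁B^d + a₁ and E₂ = A₂B^d + a₂ and maxima α₁, α₂ respectively (so h_j(x) = α_j·√(1 − ‖A_j^{−1}(x−a_j)‖²) on E_j and 0 outside). Then the ellipsoidal function with base ellipsoid ((A₁+A₂)/2)·B^d + (a₁+a₂)/2 and maximum √(α₁α₂) is also below f. -/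
open Matrix

lemma posDef_half_add {d : ℕ} {A B : Matrix (Fin d) (Fin d) ℝ}
    (hA : A.PosDef) (hB : B.PosDef) : ((2:ℝ)⁻¹ • (A + B)).PosDef := by
  have hh : (A + B).IsHermitian := hA.1.add hB.1
  refine Matrix.PosDef.of_dotProduct_mulVec_pos ?_ (fun x hx => ?_)
  · unfold Matrix.IsHermitian
    rw [conjTranspose_smul, hh, star_trivial]
  have h1 := hA.dotProduct_mulVec_pos hx
  have h2 := hB.dotProduct_mulVec_pos hx
  simp only [smul_mulVec, add_mulVec, dotProduct_smul, dotProduct_add, smul_eq_mul]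
  positivity

lemma inv_apply_apply {d : ℕ} {A : Matrix (Fin d) (Fin d) ℝ} (hA : A.PosDef)
    (u : EuclideanSpace ℝ (Fin d)) :
    Matrix.toEuclideanLin A⁻¹ (Matrix.toEuclideanLin A u) = u := by
  have : A⁻¹ * A = 1 := Matrix.nonsing_inv_mul A hA.det_pos.ne'.isUnit
  simp [Matrix.toEuclideanLin_apply, Matrix.mulVec_mulVec, this]

lemma apply_inv_apply {d : ℕ} {A : Matrix (Fin d) (Fin d) ℝ} (hA : A.PosDef)
    (u : EuclideanSpace ℝ (Fin d)) :
    Matrix.toEuclideanLin A (Matrix.toEuclideanLin A⁻¹ u) = u := by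
  have : A * A⁻¹ = 1 := Matrix.mul_nonsing_inv A hA.det_pos.ne'.isUnit
  simp [Matrix.toEuclideanLin_apply, Matrix.mulVec_mulVec, this]

/-- Midpoint of two ellipsoidal functions below a log-concave function: if the
ellipsoidal functions with base ellipsoids `AⱼB^d + aⱼ` and maxima `αⱼ` (`j = 1,2`) are
below a log-concave `f`, then so is the ellipsoidal function with base ellipsoid
`((A₁+A₂)/2)B^d + (a₁+a₂)/2` and maximum `√(α₁α₂)`. -/
theorem midpoint_ellipsoidal_below (d : ℕ)
    (f : EuclideanSpace ℝ (Fin d) → ℝ) (hf0 : ∀ x, 0 ≤ f x)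
    (hlc : ∀ x y : EuclideanSpace ℝ (Fin d), ∀ s ∈ Set.Icc (0:ℝ) 1,
      f x ^ s * f y ^ (1 - s) ≤ f (s • x + (1 - s) • y))
    (A₁ A₂ : Matrix (Fin d) (Fin d) ℝ) (hA₁ : A₁.PosDef) (hA₂ : A₂.PosDef)
    (a₁ a₂ : EuclideanSpace ℝ (Fin d)) (α₁ α₂ : ℝ) (hα₁ : 0 < α₁) (hα₂ : 0 < α₂)
    (h₁ : ∀ x, α₁ * Real.sqrt (1 - ‖Matrix.toEuclideanLin A₁⁻¹ (x - a₁)‖ ^ 2) ≤ f x)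
    (h₂ : ∀ x, α₂ * Real.sqrt (1 - ‖Matrix.toEuclideanLin A₂⁻¹ (x - a₂)‖ ^ 2) ≤ f x) :
    ∀ x, Real.sqrt (α₁ * α₂) *
        Real.sqrt (1 - ‖Matrix.toEuclideanLin ((2:ℝ)⁻¹ • (A₁ + A₂))⁻¹
          (x - (2:ℝ)⁻¹ • (a₁ + a₂))‖ ^ 2) ≤ f x := by
  intro x
  have hM : ((2:ℝ)⁻¹ • (A₁ + A₂)).PosDef := posDef_half_add hA₁ hA₂
  set u : EuclideanSpace ℝ (Fin d) :=
    Matrix.toEuclideanLin ((2:ℝ)⁻¹ • (A₁ + A₂))⁻¹ (x - (2:ℝ)⁻¹ • (a₁ + a₂)) with hu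
  set t : ℝ := 1 - ‖u‖ ^ 2 with ht
  rcases le_or_gt t 0 with h | h
  · calc Real.sqrt (α₁ * α₂) * Real.sqrt t = Real.sqrt (α₁ * α₂) * 0 := by
          rw [Real.sqrt_eq_zero_of_nonpos h]
      _ = 0 := mul_zero _
      _ ≤ f x := hf0 x
  · -- define x₁, x₂
    set x₁ : EuclideanSpace ℝ (Fin d) := a₁ + Matrix.toEuclideanLin A₁ u with hx₁
    set x₂ : EuclideanSpace ℝ (Fin d) := a₂ + Matrix.toEuclideanLin A₂ u with hx₂
    have key : x - (2:ℝ)⁻¹ • (a₁ + a₂) =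
        Matrix.toEuclideanLin ((2:ℝ)⁻¹ • (A₁ + A₂)) u := by
      rw [hu, apply_inv_apply hM]
    have hxmid : (2:ℝ)⁻¹ • x₁ + (1 - (2:ℝ)⁻¹) • x₂ = x := by
      have h2 : (1 - (2:ℝ)⁻¹) = (2:ℝ)⁻¹ := by norm_num
      rw [h2, hx₁, hx₂]
      have hMu : Matrix.toEuclideanLin ((2:ℝ)⁻¹ • (A₁ + A₂)) u
          = (2:ℝ)⁻¹ • (Matrix.toEuclideanLin A₁ u + Matrix.toEuclideanLin A₂ u) := by
        simp [map_add]
      have := key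
      rw [hMu] at this
      have : x = (2:ℝ)⁻¹ • (a₁ + a₂)
          + (2:ℝ)⁻¹ • (Matrix.toEuclideanLin A₁ u + Matrix.toEuclideanLin A₂ u) := by
        rw [← this]; abel
      rw [this]
      module
    have hu₁ : Matrix.toEuclideanLin A₁⁻¹ (x₁ - a₁) = u := by
      rw [hx₁, add_sub_cancel_left, inv_apply_apply hA₁]
    have hu₂ : Matrix.toEuclideanLin A₂⁻¹ (x₂ - a₂) = u := by
      rw [hx₂, add_sub_cancel_left, inv_apply_apply hA₂]
    have hf₁ : α₁ * Real.sqrt t ≤ f x₁ := by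
      have := h₁ x₁; rwa [hu₁, ← ht] at this
    have hf₂ : α₂ * Real.sqrt t ≤ f x₂ := by
      have := h₂ x₂; rwa [hu₂, ← ht] at this
    have hs : (2:ℝ)⁻¹ ∈ Set.Icc (0:ℝ) 1 := by norm_num
    have hlc' := hlc x₁ x₂ (2:ℝ)⁻¹ hs
    rw [hxmid] at hlc'
    have hrw : ∀ y : ℝ, 0 ≤ y → y ^ ((2:ℝ)⁻¹) = Real.sqrt y := by
      intro y hy
      rw [Real.sqrt_eq_rpow]
      norm_num
    have h12 : (1 - (2:ℝ)⁻¹) = (2:ℝ)⁻¹ := by norm_num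
    rw [h12, hrw _ (hf0 x₁), hrw _ (hf0 x₂)] at hlc'
    have hst : 0 ≤ Real.sqrt t := Real.sqrt_nonneg _
    have step1 : Real.sqrt (α₁ * α₂) * Real.sqrt t
        = Real.sqrt ((α₁ * Real.sqrt t) * (α₂ * Real.sqrt t)) := by
      rw [show α₁ * Real.sqrt t * (α₂ * Real.sqrt t)
            = (α₁ * α₂) * (Real.sqrt t * Real.sqrt t) by ring,
        Real.mul_self_sqrt h.le,
        Real.sqrt_mul (by positivity : (0:ℝ) ≤ α₁ * α₂)]
    calc Real.sqrt (α₁ * α₂) * Real.sqrt t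
        = Real.sqrt ((α₁ * Real.sqrt t) * (α₂ * Real.sqrt t)) := step1
      _ ≤ Real.sqrt (f x₁ * f x₂) := by
          apply Real.sqrt_le_sqrt
          exact mul_le_mul hf₁ hf₂ (by positivity) (hf0 x₁)
      _ = Real.sqrt (f x₁) * Real.sqrt (f x₂) := Real.sqrt_mul (hf0 x₁) _
      _ ≤ f x := hlc'
end
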